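/- arXiv:2602.00967 — 2 statements merged into one kernel-verified Lean document; each statement's English description precedes it below -/
import Mathlib

section
/- Let n ∈ ℕ and let T : ℝ[x₁,…,xₙ] → ℝ[x₁,…,xₙ] be a linear map. Then there exists a unique family of polynomials (q_α)_{α∈ℕ₀ⁿ} in ℝ[x₁,…,xₙ] such that for every p ∈ ℝ[x₁,…,xₙ] one has T p = Σ_{α∈ℕ₀ⁿ} q_α · ∂^α p, where for each fixed p the sum has only finitely many nonzero terms (since ∂^α p = 0 whenever |α| exceeds the total degree of p). -/
/-!
On a monomial, `∂^α x^γ` vanishes unless `α ≤ γ`, and `∂^γ x^γ = γ!` is a nonzero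
constant. Since `p ↦ Σ_α q_α ∂^α p` is linear, it is determined by its values on the monomials
`x^γ`, where the equations `Σ_{α ≤ γ} q_α ∂^α x^γ = T x^γ` form a triangular system over the
well-founded order on multi-indices with invertible diagonal: it has exactly one solution.
-/

open MvPolynomial MeasureTheory

/-- The iterated partial derivative operator `∂^α = ∂₁^{α₁}⋯∂ₙ^{αₙ}` on `ℝ[x₁,…,xₙ]`. -/
noncomputable def pdPow {n : ℕ} (α : Fin n →₀ ℕ) :
    Module.End ℝ (MvPolynomial (Fin n) ℝ) :=
  (List.ofFn fun i : Fin n =>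
    ((pderiv i : Derivation ℝ (MvPolynomial (Fin n) ℝ) (MvPolynomial (Fin n) ℝ)).toLinearMap) ^ (α i)).prod

open Finset Nat

section PderivPow

variable {R σ : Type*} [CommSemiring R]

theorem MvPolynomial.pderiv_pow_monomial (i : σ) (k : ℕ) (β : σ →₀ ℕ) (c : R) :
    ((pderiv i : Derivation R (MvPolynomial σ R) (MvPolynomial σ R)).toLinearMap ^ k)
      (monomial β c) = monomial (β - Finsupp.single i k) (c * (β i).descFactorial k) := by
  induction k generalizing β c with
  | zero => simp
  | succ k ih =>
    have hβi : (β - Finsupp.single i 1 : σ →₀ ℕ) i = β i - 1 := by simp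
    have hsub : β - Finsupp.single i 1 - Finsupp.single i k = β - Finsupp.single i (k + 1) := by
      rw [tsub_tsub, ← Finsupp.single_add, add_comm]
    have hfac : β i * (β i - 1).descFactorial k = (β i).descFactorial (k + 1) := by
      cases β i with
      | zero => simp
      | succ m => rw [Nat.add_sub_cancel, Nat.succ_descFactorial_succ]
    rw [pow_succ, Module.End.mul_apply, Derivation.coeFn_coe, pderiv_monomial, ih, hβi, hsub,
      mul_assoc, ← Nat.cast_mul, hfac]

theorem MvPolynomial.list_prod_pderiv_pow_monomial (a : σ → ℕ) {l : List σ} (hl : l.Nodup)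
    (β : σ →₀ ℕ) (c : R) :
    (l.map fun i =>
        (pderiv i : Derivation R (MvPolynomial σ R) (MvPolynomial σ R)).toLinearMap ^ a i).prod
      (monomial β c) =
      monomial (β - (l.map fun i => Finsupp.single i (a i)).sum)
        (c * (l.map fun i => ((β i).descFactorial (a i) : R)).prod) := by
  induction l generalizing β c with
  | nil => simp
  | cons i l ih =>
    obtain ⟨hi, hl⟩ := List.nodup_cons.mp hl
    have hrest : (l.map fun j => Finsupp.single j (a j)).sum i = 0 := by
      rw [← Finsupp.applyAddHom_apply, map_list_sum, List.map_map]
      refine List.sum_eq_zero fun x hx => ?_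
      obtain ⟨j, hj, rfl⟩ := List.mem_map.mp hx
      exact Finsupp.single_eq_of_ne (ne_of_mem_of_not_mem hj hi).symm
    simp only [List.map_cons, List.prod_cons, List.sum_cons, Module.End.mul_apply]
    rw [ih hl, pderiv_pow_monomial, Finsupp.tsub_apply, hrest, tsub_zero, tsub_tsub,
      add_comm (List.sum _)]
    ring_nf

end PderivPow

variable {n : ℕ}

theorem pdPow_monomial (α β : Fin n →₀ ℕ) (c : ℝ) :
    pdPow α (monomial β c) =
      monomial (β - α) (c * ∏ i, ((β i).descFactorial (α i) : ℝ)) := by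
  rw [pdPow, List.ofFn_eq_map, list_prod_pderiv_pow_monomial _ (List.nodup_finRange n),
    ← List.ofFn_eq_map, ← List.ofFn_eq_map, List.sum_ofFn, List.prod_ofFn,
    Finsupp.univ_sum_single]

theorem pdPow_monomial_of_not_le {α β : Fin n →₀ ℕ} (h : ¬α ≤ β) (c : ℝ) :
    pdPow α (monomial β c) = 0 := by
  obtain ⟨i, hi⟩ : ∃ i, β i < α i := by simpa [Finsupp.le_def] using h
  have hi' : ((β i).descFactorial (α i) : ℝ) = 0 := mod_cast descFactorial_eq_zero_iff_lt.mpr hi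
  rw [pdPow_monomial, prod_eq_zero (mem_univ i) hi', mul_zero, map_zero]

theorem pdPow_monomial_self (α : Fin n →₀ ℕ) :
    pdPow α (monomial α 1) = C (∏ i, ((α i)! : ℝ)) := by
  simp [pdPow_monomial, descFactorial_self]

theorem support_mul_pdPow_subset (q : (Fin n →₀ ℕ) → MvPolynomial (Fin n) ℝ)
    (p : MvPolynomial (Fin n) ℝ) :
    (Function.support fun α => q α * pdPow α p) ⊆ ↑(p.support.biUnion Iic) := by
  intro α hα
  by_contra hα'
  refine (Function.mem_support.mp hα) ?_
  simp only [coe_biUnion, mem_coe, coe_Iic, Set.mem_iUnion, Set.mem_Iic, not_exists] at hα'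
  rw [p.as_sum, map_sum, sum_eq_zero fun β hβ => pdPow_monomial_of_not_le (hα' β hβ) _,
    mul_zero]

theorem finite_support_mul_pdPow (q : (Fin n →₀ ℕ) → MvPolynomial (Fin n) ℝ)
    (p : MvPolynomial (Fin n) ℝ) : (Function.support fun α => q α * pdPow α p).Finite :=
  (p.support.biUnion Iic).finite_toSet.subset (support_mul_pdPow_subset q p)

noncomputable def diffOp (q : (Fin n →₀ ℕ) → MvPolynomial (Fin n) ℝ) :
    Module.End ℝ (MvPolynomial (Fin n) ℝ) where
  toFun p := ∑ᶠ α, q α * pdPow α p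
  map_add' p p' := by
    simp only [map_add, mul_add]
    exact finsum_add_distrib (finite_support_mul_pdPow q p) (finite_support_mul_pdPow q p')
  map_smul' c p := by
    simp only [LinearMap.map_smul, mul_smul_comm, RingHom.id_apply, smul_finsum]

theorem diffOp_apply (q : (Fin n →₀ ℕ) → MvPolynomial (Fin n) ℝ)
    (p : MvPolynomial (Fin n) ℝ) :
    diffOp q p = ∑ᶠ α, q α * pdPow α p :=
  rfl

theorem diffOp_monomial_one (q : (Fin n →₀ ℕ) → MvPolynomial (Fin n) ℝ)
    (γ : Fin n →₀ ℕ) :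
    diffOp q (monomial γ 1) =
      q γ * C (∏ i, ((γ i)! : ℝ)) + ∑ α ∈ Iio γ, q α * pdPow α (monomial γ 1) := by
  have hsupp : (Function.support fun α => q α * pdPow α (monomial γ 1)) ⊆ ↑(Iic γ) := by
    simpa [support_monomial] using support_mul_pdPow_subset q (monomial γ (1 : ℝ))
  rw [diffOp_apply, finsum_eq_sum_of_support_subset _ hsupp, ← Iio_insert,
    sum_insert notMem_Iio_self, pdPow_monomial_self]

theorem diffOp_injective : Function.Injective (diffOp (n := n)) := by
  intro q q' h
  funext γ
  induction γ using WellFoundedLT.induction with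
  | ind γ ih =>
    have hγ := LinearMap.congr_fun h (monomial γ 1)
    rw [diffOp_monomial_one, diffOp_monomial_one,
      sum_congr rfl fun α hα => by rw [ih α (mem_Iio.mp hα)], add_left_inj] at hγ
    exact mul_right_cancel₀ (C_ne_zero.mpr (by positivity)) hγ

/-- Solving `diffOp q (x^γ) = T (x^γ)` for `q γ`, which enters with the factor `γ!`,
by recursion over the multi-indices below `γ`. -/
noncomputable def canonicalCoeff (T : Module.End ℝ (MvPolynomial (Fin n) ℝ)) :
    (Fin n →₀ ℕ) → MvPolynomial (Fin n) ℝ :=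
  wellFounded_lt.fix fun γ q =>
    C (∏ i, ((γ i)! : ℝ))⁻¹ *
      (T (monomial γ 1) - ∑ β : Iio γ, q β (mem_Iio.mp β.2) * pdPow β (monomial γ 1))

theorem canonicalCoeff_mul_factorial (T : Module.End ℝ (MvPolynomial (Fin n) ℝ))
    (γ : Fin n →₀ ℕ) :
    canonicalCoeff T γ * C (∏ i, ((γ i)! : ℝ)) =
      T (monomial γ 1) - ∑ β ∈ Iio γ, canonicalCoeff T β * pdPow β (monomial γ 1) := by
  have hγ : (∏ i, ((γ i)! : ℝ)) ≠ 0 := by positivity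
  rw [canonicalCoeff, WellFounded.fix_eq, mul_right_comm, ← C_mul, inv_mul_cancel₀ hγ, C_1,
    one_mul]
  exact congrArg _ (sum_coe_sort (Iio γ) fun β => canonicalCoeff T β * pdPow β (monomial γ 1))

theorem diffOp_canonicalCoeff (T : Module.End ℝ (MvPolynomial (Fin n) ℝ)) :
    diffOp (canonicalCoeff T) = T := by
  ext γ : 1
  refine LinearMap.ext_ring ?_
  change diffOp _ (monomial γ 1) = T (monomial γ 1)
  rw [diffOp_monomial_one, canonicalCoeff_mul_factorial, sub_add_cancel]

theorem canonical_representation_general (n : ℕ)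
    (T : MvPolynomial (Fin n) ℝ →ₗ[ℝ] MvPolynomial (Fin n) ℝ) :
    ∃! q : (Fin n →₀ ℕ) → MvPolynomial (Fin n) ℝ,
      ∀ p : MvPolynomial (Fin n) ℝ,
        (Function.support fun α => q α * pdPow α p).Finite ∧
        T p = ∑ᶠ α, q α * pdPow α p := by
  refine ⟨canonicalCoeff T, fun p => ⟨finite_support_mul_pdPow _ p, ?_⟩, fun q hq => ?_⟩
  · rw [← diffOp_apply, diffOp_canonicalCoeff]
  · refine diffOp_injective (LinearMap.ext fun p => ?_)
    rw [diffOp_apply, ← (hq p).2, diffOp_canonicalCoeff]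

/-- **Canonical representation.** Every linear map `T` on `ℝ[x₁,…,xₙ]` is of the form
`T = Σ_{α∈ℕ₀ⁿ} q_α ⬝ ∂^α` for a unique family of polynomials `(q_α)_α`, where for each
fixed `p` only finitely many of the terms `q_α ⬝ ∂^α p` are nonzero. -/
theorem canonical_representation (n : ℕ) (hn : 0 < n)
    (T : MvPolynomial (Fin n) ℝ →ₗ[ℝ] MvPolynomial (Fin n) ℝ) :
    ∃! q : (Fin n →₀ ℕ) → MvPolynomial (Fin n) ℝ,
      ∀ p : MvPolynomial (Fin n) ℝ,
        (Function.support fun α => q α * pdPow α p).Finite ∧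
        T p = ∑ᶠ α, q α * pdPow α p :=
  canonical_representation_general n T
end

section
/- Let n ∈ ℕ and let A : ℝ[x₁,…,xₙ] → ℝ[x₁,…,xₙ] be a linear map. Then the following are equivalent: (ii) for every α ∈ ℕ₀ⁿ, sup_{k∈ℕ₀} deg(A^k x^α) < ∞; (iii) for every p ∈ ℝ[x₁,…,xₙ], sup_{k∈ℕ₀} deg(A^k p) < ∞; (iv) there exist subvector spaces V_i ⊆ ℝ[x₁,…,xₙ], i ∈ ℕ₀, such that (a) dim V_i < ∞ for all i, (b) ⋃_{i∈ℕ₀} V_i = ℝ[x₁,…,xₙ], and (c) A V_i ⊆ V_i for all i. -/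
open MvPolynomial MeasureTheory

/-!
A polynomial has an orbit of bounded degree under `A` exactly when the span of its orbit is
finite-dimensional, and orbits of bounded degree form a subspace, so it suffices to check the
monomials. Enumerating the monomials, the sums of the first `i` orbit spans form an increasing
exhaustion by finite-dimensional invariant subspaces; conversely an invariant finite-dimensional
subspace containing `p` contains its whole orbit and has bounded degree.
-/

open Submodule

namespace Module.End

variable {R M : Type*} [Semiring R] [AddCommMonoid M] [Module R M] (f : End R M)

def orbitSpan (x : M) : Submodule R M :=
  span R (Set.range fun k : ℕ => (f ^ k) x)

lemma pow_apply_mem_orbitSpan (x : M) (k : ℕ) : (f ^ k) x ∈ f.orbitSpan x :=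
  subset_span ⟨k, rfl⟩

lemma self_mem_orbitSpan (x : M) : x ∈ f.orbitSpan x := by
  simpa using f.pow_apply_mem_orbitSpan x 0

lemma orbitSpan_mem_invtSubmodule (x : M) : f.orbitSpan x ∈ f.invtSubmodule := by
  rw [mem_invtSubmodule, orbitSpan, span_le]
  rintro _ ⟨k, rfl⟩
  rw [SetLike.mem_coe, mem_comap, ← mul_apply, ← pow_succ']
  exact f.pow_apply_mem_orbitSpan x (k + 1)

lemma pow_apply_mem_of_mem_invtSubmodule {p : Submodule R M} (hp : p ∈ f.invtSubmodule)
    {x : M} (hx : x ∈ p) (k : ℕ) : (f ^ k) x ∈ p := by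
  induction k with
  | zero => simpa using hx
  | succ k ih =>
    rw [pow_succ', mul_apply]
    exact hp ih

theorem exists_seq_invtSubmodule_fg_iUnion_eq_univ (b : ℕ → M)
    (hb : span R (Set.range b) = ⊤) (hfg : ∀ j, (f.orbitSpan (b j)).FG) :
    ∃ V : ℕ → Submodule R M,
      (∀ i, (V i).FG) ∧ ⋃ i, (V i : Set M) = Set.univ ∧ ∀ i, V i ∈ f.invtSubmodule := by
  set V : ℕ → Submodule R M := fun i => (Finset.range (i + 1)).sup fun j => f.orbitSpan (b j)
  have hV_mono : Monotone V := fun i i' hii' =>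
    Finset.sup_mono (Finset.range_subset_range.mpr (by omega))
  have hV_top : ⨆ i, V i = ⊤ := by
    rw [eq_top_iff, ← hb, span_le]
    rintro _ ⟨j, rfl⟩
    have hj : f.orbitSpan (b j) ≤ V j :=
      Finset.le_sup (f := fun j => f.orbitSpan (b j)) (Finset.self_mem_range_succ j)
    exact le_iSup V j (hj (f.self_mem_orbitSpan (b j)))
  refine ⟨V, fun i => fg_finset_sup _ _ fun j _ => hfg j, ?_, fun i => ?_⟩
  · rw [← coe_iSup_of_directed V hV_mono.directed_le, hV_top, top_coe]
  · refine f.mem_invtSubmodule.mpr (Finset.sup_le fun j hj => ?_)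
    exact (f.mem_invtSubmodule.mp (f.orbitSpan_mem_invtSubmodule (b j))).trans
      (comap_mono (Finset.le_sup (f := fun j => f.orbitSpan (b j)) hj))

end Module.End

namespace MvPolynomial

section CommSemiring

variable {σ R : Type*} [CommSemiring R]

theorem exists_totalDegree_le_of_fg {V : Submodule R (MvPolynomial σ R)} (hV : V.FG) :
    ∃ D : ℕ, ∀ p ∈ V, p.totalDegree ≤ D := by
  obtain ⟨s, rfl⟩ := hV
  have hs : span R (s : Set (MvPolynomial σ R)) ≤ restrictTotalDegree σ R (s.sup totalDegree) :=
    span_le.mpr fun q hq => (mem_restrictTotalDegree _ _ _).mpr (Finset.le_sup hq)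
  exact ⟨_, fun p hp => (mem_restrictTotalDegree _ _ _).mp (hs hp)⟩

def boundedDegreeOrbit (A : Module.End R (MvPolynomial σ R)) :
    Submodule R (MvPolynomial σ R) where
  carrier := {p | ∃ D : ℕ, ∀ k : ℕ, ((A ^ k) p).totalDegree ≤ D}
  zero_mem' := ⟨0, fun k => by simp⟩
  add_mem' := by
    rintro p q ⟨D, hD⟩ ⟨E, hE⟩
    refine ⟨max D E, fun k => ?_⟩
    rw [map_add]
    exact (totalDegree_add _ _).trans (max_le_max (hD k) (hE k))
  smul_mem' := by
    rintro c p ⟨D, hD⟩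
    refine ⟨D, fun k => ?_⟩
    rw [map_smul]
    exact (totalDegree_smul_le _ _).trans (hD k)

variable (A : Module.End R (MvPolynomial σ R))

theorem boundedDegreeOrbit_eq_top_iff :
    boundedDegreeOrbit A = ⊤ ↔ ∀ α, monomial α 1 ∈ boundedDegreeOrbit A := by
  refine ⟨fun h α => h ▸ mem_top, fun h => eq_top_iff.mpr ?_⟩
  rw [← (basisMonomials σ R).span_eq, span_le]
  rintro _ ⟨α, rfl⟩
  simpa using h α

theorem mem_boundedDegreeOrbit_of_mem_invtSubmodule {V : Submodule R (MvPolynomial σ R)}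
    (hfg : V.FG) (hinv : V ∈ A.invtSubmodule) {p : MvPolynomial σ R} (hp : p ∈ V) :
    p ∈ boundedDegreeOrbit A := by
  obtain ⟨D, hD⟩ := exists_totalDegree_le_of_fg hfg
  exact ⟨D, fun k => hD _ (A.pow_apply_mem_of_mem_invtSubmodule hinv hp k)⟩

end CommSemiring

theorem fg_orbitSpan_of_mem_boundedDegreeOrbit {σ R : Type*} [CommRing R] [IsNoetherianRing R]
    [Finite σ] {A : Module.End R (MvPolynomial σ R)} {p : MvPolynomial σ R}
    (hp : p ∈ boundedDegreeOrbit A) : (A.orbitSpan p).FG := by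
  obtain ⟨D, hD⟩ := hp
  refine FG.of_le ((Module.Finite.iff_fg (N := restrictTotalDegree σ R D)).mp inferInstance)
    (span_le.mpr ?_)
  rintro _ ⟨k, rfl⟩
  exact (mem_restrictTotalDegree _ _ _).mpr (hD k)

end MvPolynomial

theorem generator_characterization_general (n : ℕ)
    (A : Module.End ℝ (MvPolynomial (Fin n) ℝ)) :
    ((∀ α : Fin n →₀ ℕ, ∃ D : ℕ, ∀ k : ℕ,
        ((A ^ k) (monomial α (1 : ℝ))).totalDegree ≤ D) ↔
      (∀ p : MvPolynomial (Fin n) ℝ, ∃ D : ℕ, ∀ k : ℕ, ((A ^ k) p).totalDegree ≤ D)) ∧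
    ((∀ p : MvPolynomial (Fin n) ℝ, ∃ D : ℕ, ∀ k : ℕ, ((A ^ k) p).totalDegree ≤ D) ↔
      (∃ V : ℕ → Submodule ℝ (MvPolynomial (Fin n) ℝ),
        (∀ i, FiniteDimensional ℝ (V i)) ∧
        (⋃ i, (V i : Set (MvPolynomial (Fin n) ℝ))) = Set.univ ∧
        (∀ i, (V i).map A ≤ V i))) := by
  refine ⟨(boundedDegreeOrbit_eq_top_iff A).symm.trans eq_top_iff', fun h => ?_, ?_⟩
  · obtain ⟨e, he⟩ := exists_surjective_nat (Fin n →₀ ℕ)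
    have hspan : span ℝ (Set.range (basisMonomials (Fin n) ℝ ∘ e)) = ⊤ := by
      rw [he.range_comp, Module.Basis.span_eq]
    obtain ⟨V, hfg, hV, hinv⟩ := A.exists_seq_invtSubmodule_fg_iUnion_eq_univ _ hspan
      fun j => fg_orbitSpan_of_mem_boundedDegreeOrbit (h _)
    exact ⟨V, fun i => Module.Finite.iff_fg.mpr (hfg i), hV,
      fun i => (A.mem_invtSubmodule_iff_map_le).mp (hinv i)⟩
  · rintro ⟨V, hfd, hV, hinv⟩ p
    obtain ⟨i, hi⟩ := Set.mem_iUnion.mp (hV ▸ Set.mem_univ p)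
    exact mem_boundedDegreeOrbit_of_mem_invtSubmodule A (Module.Finite.iff_fg.mp (hfd i))
      ((A.mem_invtSubmodule_iff_map_le).mpr (hinv i)) hi

/-- Characterization of the linear maps `A` on `ℝ[x₁,…,xₙ]` for which `e^{tA}` is well-defined:
boundedness of `deg(A^k x^α)` in `k` for all monomials, boundedness of `deg(A^k p)` in `k` for
all polynomials, and the existence of an exhausting family of finite-dimensional
`A`-invariant subspaces are all equivalent. -/
theorem generator_characterization (n : ℕ) (hn : 0 < n)
    (A : Module.End ℝ (MvPolynomial (Fin n) ℝ)) :
    ((∀ α : Fin n →₀ ℕ, ∃ D : ℕ, ∀ k : ℕ,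
        ((A ^ k) (monomial α (1 : ℝ))).totalDegree ≤ D) ↔
      (∀ p : MvPolynomial (Fin n) ℝ, ∃ D : ℕ, ∀ k : ℕ, ((A ^ k) p).totalDegree ≤ D)) ∧
    ((∀ p : MvPolynomial (Fin n) ℝ, ∃ D : ℕ, ∀ k : ℕ, ((A ^ k) p).totalDegree ≤ D) ↔
      (∃ V : ℕ → Submodule ℝ (MvPolynomial (Fin n) ℝ),
        (∀ i, FiniteDimensional ℝ (V i)) ∧
        (⋃ i, (V i : Set (MvPolynomial (Fin n) ℝ))) = Set.univ ∧
        (∀ i, (V i).map A ≤ V i))) :=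
  generator_characterization_general n A
end
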